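/- arXiv:2112.07585 — 5 statements merged into one kernel-verified Lean document; each statement's English description precedes it below -/
import Mathlib

section
/- The set V = { z = (z₁, z₂, z₃) ∈ ℂ³ : Im z₃ = |z₁|² − |z₂|² and ‖z‖ < 1 } satisfies the contracting disc hull condition at the origin. -/
open Metric Set Filter Topology

variable {E F : Type*} [NormedAddCommGroup E] [NormedSpace ℂ E]
  [NormedAddCommGroup F] [NormedSpace ℂ F]

/-- An analytic disc: continuous on the closed unit disc, holomorphic on the open unit disc. -/
def IsAnalyticDisc (φ : ℂ → E) : Prop :=
  ContinuousOn φ (closedBall (0 : ℂ) 1) ∧ DifferentiableOn ℂ φ (ball (0 : ℂ) 1)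

/-- The contracting disc hull of `K`: points `z` such that for every `ε > 0` there is a
continuous family of analytic discs whose boundaries stay in the open `ε`-neighborhood of `K`,
with the time-1 disc passing through `z` at its center and the time-0 disc entirely contained
in the `ε`-neighborhood of `K`. -/
def contractingDiscHull (K : Set E) : Set E :=
  { z | ∀ ε > 0, ∃ φ : ℝ → ℂ → E,
      ContinuousOn (fun q : ℝ × ℂ => φ q.1 q.2) (Icc (0:ℝ) 1 ×ˢ closedBall (0 : ℂ) 1) ∧
      (∀ t ∈ Icc (0:ℝ) 1, IsAnalyticDisc (φ t)) ∧
      (∀ t ∈ Icc (0:ℝ) 1, φ t '' sphere (0 : ℂ) 1 ⊆ thickening ε K) ∧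
      φ 1 0 = z ∧
      φ 0 '' closedBall (0 : ℂ) 1 ⊆ thickening ε K }

/-- `V` satisfies the contracting disc hull condition at `p`: for every compact subset `K ⊆ V`
that is a neighborhood of `p` in the subspace topology of `V`, the point `p` lies in the
interior (in the ambient space) of the contracting disc hull of `K`. -/
def CDHConditionAt (V : Set E) (p : E) : Prop :=
  ∀ K : Set E, K ⊆ V → IsCompact K → K ∈ 𝓝[V] p →
    p ∈ interior (contractingDiscHull K)

/-- `f ∈ 𝒪(S)`: `f` agrees on `S` with a map holomorphic on some open neighborhood of `S`. -/
def MemO (f : E → F) (S : Set E) : Prop :=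
  ∃ U : Set E, IsOpen U ∧ S ⊆ U ∧
    ∃ g : E → F, DifferentiableOn ℂ g U ∧ EqOn f g S

/-- The tangent cone of `V` at `p`: limits of sequences `r j • (q j - p)` with `r j > 0`,
`q j ∈ V`. -/
def tangentConeOf (V : Set E) (p : E) : Set E :=
  { v | ∃ (r : ℕ → ℝ) (q : ℕ → E), (∀ j, 0 < r j) ∧ (∀ j, q j ∈ V) ∧
      Tendsto (fun j => r j • (q j - p)) atTop (𝓝 v) }

/-- `V` is locally closed: every point of `V` has an open neighborhood `U` such that
`V ∩ U` is closed in `U`. -/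
def IsLocallyClosedSet (V : Set E) : Prop :=
  ∀ p ∈ V, ∃ U : Set E, IsOpen U ∧ p ∈ U ∧ ∃ C : Set E, IsClosed C ∧ V ∩ U = C ∩ U

/-- A set is circular if it is invariant under multiplication by `e^{iθ}`. -/
def IsCircular (S : Set E) : Prop :=
  ∀ p ∈ S, ∀ θ : ℝ, Complex.exp (θ * Complex.I) • p ∈ S

/-- `φ` is a global semiflow of the holomorphic vector field `Z` on the open set `U`. -/
def IsGlobalSemiflow (U : Set E) (Z : E → E) (φ : ℝ → E → E) : Prop :=
  ContinuousOn (fun q : ℝ × E => φ q.1 q.2) (Ici (0:ℝ) ×ˢ U) ∧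
  (∀ z ∈ U, φ 0 z = z) ∧
  (∀ t ∈ Ici (0:ℝ), ∀ z ∈ U, φ t z ∈ U) ∧
  (∀ z ∈ U, ∀ t ∈ Ici (0:ℝ), HasDerivWithinAt (fun s => φ s z) (Z (φ t z)) (Ici (0:ℝ)) t)

/-!
Through every point `q` of `ℂ³` passes an affine analytic disc `ζ ↦ q + ζ • w q` whose boundary
circle lies on the quadric `Im z₃ = |z₁|² − |z₂|²`. With `s = Im q₃ − (|q₁|² − |q₂|²)` and
`w q = (√s, √(−s), 2i(q̄₁√s − q̄₂√(−s)))`, expanding `|q₁ + ζ√s|² − |q₂ + ζ√(−s)|²` on `|ζ| = 1`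
leaves exactly `Im (q₃ + ζ w₃)`. Since `w` is continuous and vanishes at the origin, sliding the
centre from `0` to a point near `0` gives a continuous family of small discs with boundaries in
the quadric near the origin, starting from the constant disc at `0`.
-/

open ComplexConjugate

theorem mem_contractingDiscHull_of_discs {K : Set E} {z : E} (φ : ℝ → ℂ → E)
    (hcont : ContinuousOn (fun q : ℝ × ℂ => φ q.1 q.2) (Icc (0 : ℝ) 1 ×ˢ closedBall (0 : ℂ) 1))
    (hdisc : ∀ t ∈ Icc (0 : ℝ) 1, IsAnalyticDisc (φ t))
    (hbdry : ∀ t ∈ Icc (0 : ℝ) 1, φ t '' sphere (0 : ℂ) 1 ⊆ K)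
    (h1 : φ 1 0 = z) (h0 : φ 0 '' closedBall (0 : ℂ) 1 ⊆ K) :
    z ∈ contractingDiscHull K := fun _ hε =>
  ⟨φ, hcont, hdisc, fun t ht => (hbdry t ht).trans (self_subset_thickening hε K), h1,
    h0.trans (self_subset_thickening hε K)⟩

theorem isAnalyticDisc_add_smul (q w : E) : IsAnalyticDisc fun ζ : ℂ => q + ζ • w :=
  ⟨by fun_prop, by fun_prop⟩

theorem mem_contractingDiscHull_of_affine_discs {K : Set E} {w : E → E} {p z : E}
    (hw : Continuous w) (hwp : w p = 0) (hp : p ∈ K)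
    (hK : ∀ t ∈ Icc (0 : ℝ) 1, ∀ ζ ∈ sphere (0 : ℂ) 1,
      p + (t : ℂ) • (z - p) + ζ • w (p + (t : ℂ) • (z - p)) ∈ K) :
    z ∈ contractingDiscHull K := by
  refine mem_contractingDiscHull_of_discs
    (fun t ζ => p + (t : ℂ) • (z - p) + ζ • w (p + (t : ℂ) • (z - p)))
    (Continuous.continuousOn (by fun_prop)) (fun _ _ => isAnalyticDisc_add_smul _ _) ?_
    (by simp) ?_
  · rintro t ht _ ⟨ζ, hζ, rfl⟩
    exact hK t ht ζ hζ
  · rintro _ ⟨ζ, -, rfl⟩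
    simpa [hwp] using hp

theorem mem_interior_contractingDiscHull_of_boundary_discs {M K : Set E} {w : E → E} {p : E}
    (hw : Continuous w) (hwp : w p = 0) (hM : ∀ q, ∀ ζ ∈ sphere (0 : ℂ) 1, q + ζ • w q ∈ M)
    (hMK : ∃ U ∈ 𝓝 p, M ∩ U ⊆ K) : p ∈ interior (contractingDiscHull K) := by
  obtain ⟨U, hU, hMU⟩ := hMK
  obtain ⟨δ, hδ, hδU⟩ := Metric.mem_nhds_iff.mp hU
  obtain ⟨r, hr, hwr⟩ :=
    Metric.continuousAt_iff.mp (hw.continuousAt (x := p)) (δ / 2) (half_pos hδ)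
  refine mem_interior.mpr ⟨ball p (min r (δ / 2)), fun z hz => ?_, isOpen_ball,
    mem_ball_self (by positivity)⟩
  have hpK : p ∈ K := hMU ⟨by simpa [hwp] using hM p 1 (by simp), mem_of_mem_nhds hU⟩
  refine mem_contractingDiscHull_of_affine_discs hw hwp hpK fun t ht ζ hζ =>
    hMU ⟨hM _ ζ hζ, hδU ?_⟩
  set q := p + (t : ℂ) • (z - p)
  have hqp : ‖(t : ℂ) • (z - p)‖ < min r (δ / 2) := by
    rw [mem_ball, dist_eq_norm] at hz
    rw [norm_smul, Complex.norm_real, Real.norm_of_nonneg ht.1]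
    exact lt_of_le_of_lt (mul_le_of_le_one_left (norm_nonneg _) ht.2) hz
  have hqr : dist q p < r := by
    simpa [q, dist_eq_norm] using hqp.trans_le (min_le_left _ _)
  have hwq : ‖w q‖ < δ / 2 := by simpa [hwp, dist_eq_norm] using hwr hqr
  rw [mem_ball, dist_eq_norm, add_sub_right_comm, add_sub_cancel_left]
  calc ‖(t : ℂ) • (z - p) + ζ • w q‖ ≤ ‖(t : ℂ) • (z - p)‖ + ‖w q‖ := by
        rw [← one_mul ‖w q‖, ← show ‖ζ‖ = 1 by simpa using hζ, ← norm_smul]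
        exact norm_add_le _ _
    _ < δ / 2 + δ / 2 := add_lt_add (hqp.trans_le (min_le_right _ _)) hwq
    _ = δ := add_halves δ

theorem Real.sqrt_sq_sub_sqrt_neg_sq (s : ℝ) : √s ^ 2 - √(-s) ^ 2 = s := by
  rcases le_total 0 s with hs | hs
  · rw [Real.sq_sqrt hs, Real.sqrt_eq_zero'.mpr (neg_nonpos.mpr hs)]
    ring
  · rw [Real.sq_sqrt (neg_nonneg.mpr hs), Real.sqrt_eq_zero'.mpr hs]
    ring

namespace IndefiniteQuadric

local notation "ℂ³" => EuclideanSpace ℂ (Fin 3)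

def quadric : Set ℂ³ := {z | (z 2).im = ‖z 0‖ ^ 2 - ‖z 1‖ ^ 2}

noncomputable def defect (q : ℂ³) : ℝ := (q 2).im - (‖q 0‖ ^ 2 - ‖q 1‖ ^ 2)

noncomputable def discDirection (q : ℂ³) : ℂ³ :=
  !₂[(√(defect q) : ℂ), (√(-defect q) : ℂ),
    2 * Complex.I * (conj (q 0) * √(defect q) - conj (q 1) * √(-defect q))]

theorem continuous_discDirection : Continuous discDirection := by
  unfold discDirection defect
  fun_prop

theorem discDirection_zero : discDirection 0 = 0 := by
  ext i
  fin_cases i <;> simp [discDirection, defect]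

theorem add_smul_discDirection_mem_quadric (q : ℂ³) {ζ : ℂ} (hζ : ‖ζ‖ = 1) :
    q + ζ • discDirection q ∈ quadric := by
  have hζ' : ζ.re ^ 2 + ζ.im ^ 2 = 1 := by
    simpa [Complex.sq_norm, Complex.normSq_apply, sq, hζ] using (Complex.sq_norm ζ).symm
  have hs := Real.sqrt_sq_sub_sqrt_neg_sq (defect q)
  have hd : defect q =
      (q 2).im - ((q 0).re ^ 2 + (q 0).im ^ 2 - ((q 1).re ^ 2 + (q 1).im ^ 2)) := by
    simp only [defect, Complex.sq_norm, Complex.normSq_apply]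
    ring
  simp only [quadric, mem_ofPred_eq, discDirection, PiLp.add_apply, PiLp.smul_apply, smul_eq_mul,
    Matrix.cons_val, Matrix.cons_val_zero, Matrix.cons_val_one, Complex.sq_norm,
    Complex.normSq_apply, Complex.add_re, Complex.add_im, Complex.sub_re, Complex.sub_im,
    Complex.mul_re, Complex.mul_im, Complex.conj_re, Complex.conj_im, Complex.ofReal_re,
    Complex.ofReal_im, Complex.I_re, Complex.I_im, Complex.re_ofNat, Complex.im_ofNat]
  linear_combination (√(-defect q) ^ 2 - √(defect q) ^ 2) * hζ' - hs - hd

end IndefiniteQuadric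

/-- the hypersurface `Im z₃ = |z₁|² − |z₂|²`, `‖z‖ < 1`, satisfies the
contracting disc hull condition at the origin. -/
theorem cdh_condition_hypersurface_C3 :
    CDHConditionAt
      {z : EuclideanSpace ℂ (Fin 3) |
        (z 2).im = ‖z 0‖ ^ 2 - ‖z 1‖ ^ 2 ∧ ‖z‖ < 1}
      (0 : EuclideanSpace ℂ (Fin 3)) := by
  intro K _ _ hK
  obtain ⟨U, hU, hUK⟩ := mem_nhdsWithin_iff_exists_mem_nhds_inter.mp hK
  refine mem_interior_contractingDiscHull_of_boundary_discs
    IndefiniteQuadric.continuous_discDirection IndefiniteQuadric.discDirection_zero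
    (fun q _ hζ => IndefiniteQuadric.add_smul_discDirection_mem_quadric q (by simpa using hζ))
    ⟨U ∩ ball 0 1, inter_mem hU (ball_mem_nhds _ one_pos), ?_⟩
  rintro z ⟨hz, hzU, hz1⟩
  exact hUK ⟨hzU, hz, by simpa using hz1⟩
end

section
/- The set V = { z = (z₁, …, z₆) ∈ ℂ⁶ : Im z₁ = |z₂|² − |z₃|², Im z₄ = |z₅|² − |z₆|², and ‖z‖ < 1 } satisfies the contracting disc hull condition at the origin. -/
/-! Given `w` near `0`, choose `b, d ≥ 0` with `b² - d² = Im w₀ + |w₂|² - |w₁|²` and take the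
discs `ζ ↦ (t Re w₀ + i t² Im w₀ + 2i t² (w̄₁ b - w̄₂ d) ζ, t (w₁ + bζ), t (w₂ + dζ))`, and
likewise in the coordinates `3, 4, 5`. For `|ζ| = 1` both sides of `Im z₀ = |z₁|² - |z₂|²` equal
`t²` times their value at `t = 1`, so every boundary circle lies on the two quadrics. The discs
are the zero disc at `t = 0`, pass through `w` at `t = 1`, and depend continuously on `w`,
vanishing identically at `w = 0`; by compactness of `[0, 1] × 𝔻̄` they stay in any prescribed
neighbourhood of `0` once `w` is close to `0`. Hence a ball around `0` lies in the contracting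
disc hull of every compact neighbourhood of `0` in `V`. -/

open Metric Set Filter Topology

variable {E F : Type*} [NormedAddCommGroup E] [NormedSpace ℂ E]
  [NormedAddCommGroup F] [NormedSpace ℂ F]

open Complex ComplexConjugate

theorem mem_contractingDiscHull_of_family {K : Set E} {φ : ℝ → ℂ → E}
    (hφ : ContinuousOn (fun q : ℝ × ℂ => φ q.1 q.2) (Icc (0:ℝ) 1 ×ˢ closedBall (0 : ℂ) 1))
    (hdisc : ∀ t ∈ Icc (0:ℝ) 1, IsAnalyticDisc (φ t))
    (hbdry : ∀ t ∈ Icc (0:ℝ) 1, φ t '' sphere (0 : ℂ) 1 ⊆ K)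
    (hstart : φ 0 '' closedBall (0 : ℂ) 1 ⊆ K) :
    φ 1 0 ∈ contractingDiscHull K := fun _ hε =>
  ⟨φ, hφ, hdisc, fun t ht => (hbdry t ht).trans (self_subset_thickening hε K), rfl,
    hstart.trans (self_subset_thickening hε K)⟩

theorem cdhConditionAt_of_disc_family {V M : Set E} {p : E} (hp : p ∈ V)
    (hMV : ∀ᶠ z in 𝓝 p, z ∈ M → z ∈ V) (Φ : E → ℝ → ℂ → E)
    (hΦ : Continuous fun x : E × ℝ × ℂ => Φ x.1 x.2.1 x.2.2)
    (hhol : ∀ w t, DifferentiableOn ℂ (Φ w t) (ball 0 1))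
    (hbdry : ∀ w t, ∀ ζ ∈ sphere (0 : ℂ) 1, Φ w t ζ ∈ M)
    (hstart : ∀ w ζ, Φ w 0 ζ = p) (hend : ∀ w, Φ w 1 0 = w) (hbase : ∀ t ζ, Φ p t ζ = p) :
    CDHConditionAt V p := by
  intro K _ _ hK
  obtain ⟨δ, hδ, hδK⟩ := mem_nhdsWithin_iff.1 hK
  have hpK : p ∈ K := hδK ⟨mem_ball_self hδ, hp⟩
  have hW : {z | z ∈ ball p δ ∧ (z ∈ M → z ∈ V)} ∈ 𝓝 p :=
    inter_mem (ball_mem_nhds p hδ) hMV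
  have hsmall : ∀ᶠ w in 𝓝 p, ∀ q ∈ Icc (0:ℝ) 1 ×ˢ closedBall (0 : ℂ) 1,
      Φ w q.1 q.2 ∈ ball p δ ∧ (Φ w q.1 q.2 ∈ M → Φ w q.1 q.2 ∈ V) :=
    (isCompact_Icc.prod (isCompact_closedBall 0 1)).eventually_forall_of_forall_eventually
      fun q _ => (hΦ.continuousAt (x := (p, q))).eventually_mem (by simpa only [hbase] using hW)
  rw [mem_interior_iff_mem_nhds]
  filter_upwards [hsmall] with w hw
  have hφ : Continuous fun q : ℝ × ℂ => Φ w q.1 q.2 := hΦ.comp (Continuous.prodMk_right w)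
  rw [← hend w]
  refine mem_contractingDiscHull_of_family hφ.continuousOn
    (fun t _ => ⟨(hφ.comp (Continuous.prodMk_right t)).continuousOn, hhol w t⟩) ?_ ?_
  · rintro t ht _ ⟨ζ, hζ, rfl⟩
    have hq := hw (t, ζ) ⟨ht, sphere_subset_closedBall hζ⟩
    exact hδK ⟨hq.1, hq.2 (hbdry w t ζ hζ)⟩
  · rintro _ ⟨ζ, -, rfl⟩
    rw [hstart]
    exact hpK

/-- On `|ζ| = 1`, `|a + bζ|² - |c + dζ|² = |a|² - |c|² + b² - d² + 2 Re ((āb - c̄d) ζ)`,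
and `Im (2i X) = 2 Re X`. -/
theorem im_disc_eq_sq_norm_sub_sq_norm (w₀ a c : ℂ) {b d : ℝ}
    (h : b ^ 2 - d ^ 2 = w₀.im + ‖c‖ ^ 2 - ‖a‖ ^ 2) (t : ℝ) {ζ : ℂ} (hζ : ‖ζ‖ = 1) :
    (t * w₀.re + I * t ^ 2 * w₀.im + 2 * I * t ^ 2 * (conj a * b - conj c * d) * ζ).im
      = ‖t * (a + b * ζ)‖ ^ 2 - ‖t * (c + d * ζ)‖ ^ 2 := by
  have hζ' : ζ.re ^ 2 + ζ.im ^ 2 = 1 := by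
    rw [← one_pow 2, ← hζ, Complex.sq_norm, Complex.normSq_apply]; ring
  simp only [Complex.sq_norm, Complex.normSq_apply] at h ⊢
  simp only [Complex.add_im, Complex.add_re, Complex.mul_im, Complex.mul_re, Complex.I_re,
    Complex.I_im, Complex.ofReal_re, Complex.ofReal_im, Complex.conj_re, Complex.conj_im,
    Complex.sub_re, Complex.sub_im, Complex.re_ofNat, Complex.im_ofNat, ← Complex.ofReal_pow]
  linear_combination (-(t ^ 2 * (b ^ 2 - d ^ 2))) * hζ' - t ^ 2 * h

noncomputable def quadricDefect (w : Fin 3 → ℂ) : ℝ := (w 0).im + ‖w 2‖ ^ 2 - ‖w 1‖ ^ 2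

noncomputable def quadricDisc (w : Fin 3 → ℂ) (t : ℝ) (ζ : ℂ) : Fin 3 → ℂ :=
  let b : ℝ := √(quadricDefect w)⁺
  let d : ℝ := √(quadricDefect w)⁻
  ![t * (w 0).re + I * t ^ 2 * (w 0).im + 2 * I * t ^ 2 * (conj (w 1) * b - conj (w 2) * d) * ζ,
    t * (w 1 + b * ζ), t * (w 2 + d * ζ)]

@[fun_prop]
theorem Continuous.quadricDisc {X : Type*} [TopologicalSpace X] {w : X → Fin 3 → ℂ} {t : X → ℝ}
    {ζ : X → ℂ} (hw : Continuous w) (ht : Continuous t) (hζ : Continuous ζ) :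
    Continuous fun x => quadricDisc (w x) (t x) (ζ x) := by
  unfold _root_.quadricDisc quadricDefect
  fun_prop

@[fun_prop]
theorem Differentiable.quadricDisc (w : Fin 3 → ℂ) (t : ℝ) {ζ : ℂ → ℂ} (hζ : Differentiable ℂ ζ) :
    Differentiable ℂ fun x => quadricDisc w t (ζ x) := by
  refine differentiable_pi.2 fun i => ?_
  fin_cases i <;>
    simp only [_root_.quadricDisc, Fin.zero_eta, Fin.mk_one, Fin.reduceFinMk, Matrix.cons_val] <;>
    fun_prop

theorem quadricDisc_zero_time (w : Fin 3 → ℂ) (ζ : ℂ) : quadricDisc w 0 ζ = 0 := by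
  ext i; fin_cases i <;> simp [quadricDisc]

theorem quadricDisc_one_zero (w : Fin 3 → ℂ) : quadricDisc w 1 0 = w := by
  ext i; fin_cases i <;> simp [quadricDisc, Complex.ext_iff]

theorem quadricDisc_zero (t : ℝ) (ζ : ℂ) : quadricDisc 0 t ζ = 0 := by
  ext i; fin_cases i <;> simp [quadricDisc, quadricDefect]

theorem quadricDisc_im_eq_of_norm_eq_one (w : Fin 3 → ℂ) (t : ℝ) {ζ : ℂ} (hζ : ‖ζ‖ = 1) :
    (quadricDisc w t ζ 0).im = ‖quadricDisc w t ζ 1‖ ^ 2 - ‖quadricDisc w t ζ 2‖ ^ 2 := by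
  have hbd : √(quadricDefect w)⁺ ^ 2 - √(quadricDefect w)⁻ ^ 2 = quadricDefect w := by
    rw [Real.sq_sqrt (posPart_nonneg _), Real.sq_sqrt (negPart_nonneg _), posPart_sub_negPart]
  exact im_disc_eq_sq_norm_sub_sq_norm _ _ _ hbd t hζ

noncomputable def twoQuadricDisc (w : EuclideanSpace ℂ (Fin 6)) (t : ℝ) (ζ : ℂ) :
    EuclideanSpace ℂ (Fin 6) :=
  let p := quadricDisc ![w 0, w 1, w 2] t ζ
  let q := quadricDisc ![w 3, w 4, w 5] t ζ
  WithLp.toLp 2 ![p 0, p 1, p 2, q 0, q 1, q 2]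

theorem continuous_twoQuadricDisc :
    Continuous fun x : EuclideanSpace ℂ (Fin 6) × ℝ × ℂ => twoQuadricDisc x.1 x.2.1 x.2.2 := by
  unfold twoQuadricDisc
  fun_prop

theorem differentiable_twoQuadricDisc (w : EuclideanSpace ℂ (Fin 6)) (t : ℝ) :
    Differentiable ℂ (twoQuadricDisc w t) := by
  have h : Differentiable ℂ fun ζ => (twoQuadricDisc w t ζ).ofLp := differentiable_pi.2 fun i => by
    fin_cases i <;>
      simp only [twoQuadricDisc, Fin.zero_eta, Fin.mk_one, Fin.reduceFinMk, Matrix.cons_val] <;>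
      fun_prop
  exact (PiLp.continuousLinearEquiv 2 ℂ fun _ : Fin 6 => ℂ).symm.differentiable.comp h

theorem twoQuadricDisc_zero_time (w : EuclideanSpace ℂ (Fin 6)) (ζ : ℂ) :
    twoQuadricDisc w 0 ζ = 0 := by
  ext i; fin_cases i <;> simp [twoQuadricDisc, quadricDisc_zero_time]

theorem twoQuadricDisc_one_zero (w : EuclideanSpace ℂ (Fin 6)) : twoQuadricDisc w 1 0 = w := by
  ext i; fin_cases i <;> simp [twoQuadricDisc, quadricDisc_one_zero]

theorem twoQuadricDisc_zero (t : ℝ) (ζ : ℂ) : twoQuadricDisc 0 t ζ = 0 := by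
  ext i
  fin_cases i <;>
    simp [twoQuadricDisc, ← Matrix.zero_empty, Matrix.cons_zero_zero, quadricDisc_zero]

def twoQuadrics : Set (EuclideanSpace ℂ (Fin 6)) :=
  {z | (z 0).im = ‖z 1‖ ^ 2 - ‖z 2‖ ^ 2 ∧ (z 3).im = ‖z 4‖ ^ 2 - ‖z 5‖ ^ 2}

theorem twoQuadricDisc_mem_twoQuadrics (w : EuclideanSpace ℂ (Fin 6)) (t : ℝ) {ζ : ℂ}
    (hζ : ‖ζ‖ = 1) : twoQuadricDisc w t ζ ∈ twoQuadrics :=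
  ⟨quadricDisc_im_eq_of_norm_eq_one _ t hζ, quadricDisc_im_eq_of_norm_eq_one _ t hζ⟩

/-- the generic codimension-2 submanifold in ℂ⁶ satisfies the contracting disc
hull condition at the origin. -/
theorem cdh_condition_submanifold_C6 :
    CDHConditionAt
      {z : EuclideanSpace ℂ (Fin 6) |
        (z 0).im = ‖z 1‖ ^ 2 - ‖z 2‖ ^ 2 ∧
        (z 3).im = ‖z 4‖ ^ 2 - ‖z 5‖ ^ 2 ∧ ‖z‖ < 1}
      (0 : EuclideanSpace ℂ (Fin 6)) := by
  refine cdhConditionAt_of_disc_family (M := twoQuadrics) (by simp) ?_ twoQuadricDisc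
    continuous_twoQuadricDisc (fun w t => (differentiable_twoQuadricDisc w t).differentiableOn)
    (fun w t ζ hζ => twoQuadricDisc_mem_twoQuadrics w t (mem_sphere_zero_iff_norm.1 hζ))
    twoQuadricDisc_zero_time twoQuadricDisc_one_zero twoQuadricDisc_zero
  filter_upwards [ball_mem_nhds 0 one_pos] with z hz hM
  exact ⟨hM.1, hM.2, mem_ball_zero_iff.1 hz⟩
end

section
/- Let Φ : ℂ^n → ℂ^m be an entire holomorphic map and let K ⊆ ℂ^n be compact. Then Φ maps the contracting disc hull of K into the contracting disc hull of Φ(K); that is, Φ(K̂_CD) ⊆ (Φ(K))̂_CD. -/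
open Metric Set Filter Topology

variable {E F : Type*} [NormedAddCommGroup E] [NormedSpace ℂ E]
  [NormedAddCommGroup F] [NormedSpace ℂ F]

/-! Push the family of discs forward by `Φ`: composition with an entire map preserves analytic
discs, and since `K` is compact, `Φ` maps a small enough thickening of `K` into the
`ε`-thickening of `Φ '' K`. -/

theorem IsCompact.exists_image_thickening_subset_thickening {α β : Type*} [PseudoMetricSpace α]
    [PseudoMetricSpace β] {f : α → β} (hf : Continuous f) {K : Set α} (hK : IsCompact K)
    {ε : ℝ} (hε : 0 < ε) : ∃ δ > 0, f '' thickening δ K ⊆ thickening ε (f '' K) := by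
  obtain ⟨δ, hδ, hsub⟩ := hK.exists_thickening_subset_open (isOpen_thickening.preimage hf)
    (image_subset_iff.mp (self_subset_thickening hε _))
  exact ⟨δ, hδ, image_subset_iff.mpr hsub⟩

theorem IsAnalyticDisc.comp {Φ : E → F} (hΦ : Differentiable ℂ Φ) {φ : ℂ → E}
    (hφ : IsAnalyticDisc φ) : IsAnalyticDisc (Φ ∘ φ) :=
  ⟨hΦ.continuous.comp_continuousOn hφ.1, hΦ.comp_differentiableOn hφ.2⟩

theorem image_contractingDiscHull_subset {Φ : E → F} (hΦ : Differentiable ℂ Φ) {K : Set E}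
    (hK : IsCompact K) : Φ '' contractingDiscHull K ⊆ contractingDiscHull (Φ '' K) := by
  rintro _ ⟨z, hz, rfl⟩ ε hε
  obtain ⟨δ, hδ, hΦδ⟩ := hK.exists_image_thickening_subset_thickening hΦ.continuous hε
  obtain ⟨φ, hcont, hdisc, hbdry, hcenter, hinit⟩ := hz δ hδ
  refine ⟨fun t => Φ ∘ φ t, hΦ.continuous.comp_continuousOn hcont,
    fun t ht => (hdisc t ht).comp hΦ, fun t ht => ?_, congrArg Φ hcenter, ?_⟩
  · exact (image_comp Φ (φ t) _).subset.trans ((image_mono (hbdry t ht)).trans hΦδ)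
  · exact (image_comp Φ (φ 0) _).subset.trans ((image_mono hinit).trans hΦδ)

/-- an entire holomorphic map sends the contracting disc hull of a compact set
into the contracting disc hull of its image. -/
theorem image_of_contractingDiscHull {n m : ℕ}
    (Φ : EuclideanSpace ℂ (Fin n) → EuclideanSpace ℂ (Fin m))
    (hΦ : Differentiable ℂ Φ)
    (K : Set (EuclideanSpace ℂ (Fin n))) (hK : IsCompact K) :
    Φ '' contractingDiscHull K ⊆ contractingDiscHull (Φ '' K) :=
  image_contractingDiscHull_subset hΦ hK
end

section
/- The set V = { (z, w) ∈ ℂ² : |z|² − |w|² = 0 and |z|² + |w|² < 1 } satisfies the contracting disc hull condition at the origin. -/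
/-!
Near the origin, `K` contains the whole piece of the cone `|z| = |w|` of small radius, and this
piece is star-shaped about `0`. Every point `(z, w)` with, say, `|z| < |w|` is the centre of the
analytic disc `ζ ↦ (w B(ζ), w)`, where `B` is the Blaschke factor with `B(0) = z / w`; its boundary
lies on the torus `|z| = |w| = ‖(z, w)‖` inside the cone. Shrinking this disc radially to the
origin gives the required contracting family.
-/

open Metric Set Filter Topology

variable {E F : Type*} [NormedAddCommGroup E] [NormedSpace ℂ E]
  [NormedAddCommGroup F] [NormedSpace ℂ F]

open ComplexConjugate

theorem IsAnalyticDisc.of_differentiableOn_closedBall {ψ : ℂ → E}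
    (hψ : DifferentiableOn ℂ ψ (closedBall 0 1)) : IsAnalyticDisc ψ :=
  ⟨hψ.continuousOn, hψ.mono ball_subset_closedBall⟩

theorem contractingDiscHull_mono {K L : Set E} (h : K ⊆ L) :
    contractingDiscHull K ⊆ contractingDiscHull L := by
  intro z hz ε hε
  obtain ⟨φ, hcont, hdisc, hbdry, hcentre, hinit⟩ := hz ε hε
  exact ⟨φ, hcont, hdisc, fun t ht => (hbdry t ht).trans (thickening_subset_of_subset ε h),
    hcentre, hinit.trans (thickening_subset_of_subset ε h)⟩

/-- The radial contraction `t • ψ` of a disc with boundary in a set that is star-shaped about `0`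
keeps its boundary in that set. -/
theorem mem_contractingDiscHull_of_starConvex {K : Set E} {ψ : ℂ → E} (hψ : IsAnalyticDisc ψ)
    (hK : StarConvex ℝ 0 K) (hψK : MapsTo ψ (sphere 0 1) K) :
    ψ 0 ∈ contractingDiscHull K := by
  have hzero : (0 : E) ∈ K := hK.mem ⟨ψ 1, hψK (by simp)⟩
  intro ε hε
  refine ⟨fun t ζ => t • ψ ζ, ?_, fun t _ => ⟨?_, ?_⟩, ?_, one_smul ℝ _, ?_⟩
  · exact continuousOn_fst.smul (hψ.1.comp continuousOn_snd fun q hq => hq.2)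
  · exact continuousOn_const.smul hψ.1
  · exact hψ.2.const_smul _
  · rintro t ⟨ht₀, ht₁⟩ _ ⟨ζ, hζ, rfl⟩
    exact self_subset_thickening hε K (hK.smul_mem (hψK hζ) ht₀ ht₁)
  · rintro _ ⟨ζ, -, rfl⟩
    simpa only [zero_smul] using self_subset_thickening hε K hzero

noncomputable def blaschke (b ζ : ℂ) : ℂ := (ζ + b) / (1 + conj b * ζ)

@[simp]
theorem blaschke_zero_right (b : ℂ) : blaschke b 0 = b := by
  simp [blaschke]

theorem blaschke_denom_ne_zero {b ζ : ℂ} (hb : ‖b‖ < 1) (hζ : ‖ζ‖ ≤ 1) :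
    1 + conj b * ζ ≠ 0 := by
  intro h
  have hlt : ‖conj b * ζ‖ < 1 := by
    rw [norm_mul, RCLike.norm_conj]
    nlinarith [norm_nonneg b, norm_nonneg ζ]
  rw [eq_neg_of_add_eq_zero_right h, norm_neg, norm_one] at hlt
  exact hlt.false

theorem differentiableOn_blaschke {b : ℂ} (hb : ‖b‖ < 1) :
    DifferentiableOn ℂ (blaschke b) (closedBall 0 1) :=
  (differentiableOn_id.add_const b).div ((differentiableOn_id.const_mul (conj b)).const_add 1)
    fun _ hζ => blaschke_denom_ne_zero hb (mem_closedBall_zero_iff.mp hζ)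

theorem norm_blaschke_of_norm_eq_one {b ζ : ℂ} (hb : ‖b‖ < 1) (hζ : ‖ζ‖ = 1) :
    ‖blaschke b ζ‖ = 1 := by
  have hnum : ζ + b ≠ 0 := fun h => by
    rw [eq_neg_of_add_eq_zero_left h, norm_neg] at hζ
    exact hb.ne hζ
  have hden : ‖1 + conj b * ζ‖ = ‖ζ + b‖ := by
    have hζζ : ζ * conj ζ = 1 := by
      rw [Complex.mul_conj', hζ]; norm_num
    rw [show 1 + conj b * ζ = ζ * conj (ζ + b) by rw [map_add, mul_add, hζζ]; ring,
      norm_mul, hζ, RCLike.norm_conj, one_mul]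
  rw [blaschke, norm_div, hden, div_self (norm_ne_zero_iff.mpr hnum)]

theorem exists_analyticDisc_boundary_torus_of_norm_lt {z w : ℂ} (hzw : ‖z‖ < ‖w‖) :
    ∃ ψ : ℂ → ℂ × ℂ, IsAnalyticDisc ψ ∧ ψ 0 = (z, w) ∧
      ∀ ζ ∈ sphere (0 : ℂ) 1, ‖(ψ ζ).1‖ = ‖w‖ ∧ ‖(ψ ζ).2‖ = ‖w‖ := by
  have hw : w ≠ 0 := norm_pos_iff.mp ((norm_nonneg z).trans_lt hzw)
  have hb : ‖z / w‖ < 1 := by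
    rwa [norm_div, div_lt_one (norm_pos_iff.mpr hw)]
  refine ⟨fun ζ => (w * blaschke (z / w) ζ, w), .of_differentiableOn_closedBall
    (((differentiableOn_blaschke hb).const_mul w).prodMk (differentiableOn_const w)), ?_, ?_⟩
  · simp [mul_div_cancel₀ z hw]
  · intro ζ hζ
    rw [mem_sphere_zero_iff_norm] at hζ
    simp [norm_blaschke_of_norm_eq_one hb hζ]

theorem exists_analyticDisc_boundary_torus (p : ℂ × ℂ) :
    ∃ ψ : ℂ → ℂ × ℂ, IsAnalyticDisc ψ ∧ ψ 0 = p ∧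
      ∀ ζ ∈ sphere (0 : ℂ) 1, ‖(ψ ζ).1‖ = ‖p‖ ∧ ‖(ψ ζ).2‖ = ‖p‖ := by
  obtain ⟨z, w⟩ := p
  rcases lt_trichotomy ‖z‖ ‖w‖ with h | h | h
  · simpa [max_eq_right h.le] using exists_analyticDisc_boundary_torus_of_norm_lt h
  · refine ⟨fun _ => (z, w), .of_differentiableOn_closedBall (differentiableOn_const _), rfl, ?_⟩
    simp [h]
  · obtain ⟨ψ, hψ, hψ0, hψS⟩ := exists_analyticDisc_boundary_torus_of_norm_lt h
    refine ⟨Prod.swap ∘ ψ, ⟨continuous_swap.comp_continuousOn hψ.1, hψ.2.snd.prodMk hψ.2.fst⟩,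
      by simp [hψ0], fun ζ hζ => ?_⟩
    simpa [max_eq_left h.le, and_comm] using hψS ζ hζ

theorem starConvex_cone :
    StarConvex ℝ 0 {zw : ℂ × ℂ | ‖zw.1‖ ^ 2 - ‖zw.2‖ ^ 2 = 0 ∧ ‖zw.1‖ ^ 2 + ‖zw.2‖ ^ 2 < 1} := by
  refine starConvex_zero_iff.mpr fun c ⟨hcone, hball⟩ t ht₀ ht₁ => ?_
  simp only [mem_ofPred_eq, Prod.smul_fst, Prod.smul_snd, norm_smul, Real.norm_of_nonneg ht₀,
    mul_pow]
  constructor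
  · linear_combination t ^ 2 * hcone
  · nlinarith [sq_nonneg ‖c.1‖, sq_nonneg ‖c.2‖, mul_le_one₀ ht₁ ht₀ ht₁]

/-- the circular cone `|z|² − |w|² = 0`, `|z|² + |w|² < 1` satisfies the
contracting disc hull condition at the origin. -/
theorem cdh_condition_cone :
    CDHConditionAt
      {zw : ℂ × ℂ |
        ‖zw.1‖ ^ 2 - ‖zw.2‖ ^ 2 = 0 ∧
        ‖zw.1‖ ^ 2 + ‖zw.2‖ ^ 2 < 1}
      (0 : ℂ × ℂ) := by
  intro K _ _ hK
  obtain ⟨δ, hδ, hδK⟩ := Metric.mem_nhdsWithin_iff.mp hK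
  refine mem_interior.mpr ⟨ball 0 (min δ (1 / 2)), fun p hp => ?_, isOpen_ball,
    mem_ball_self (by positivity)⟩
  rw [mem_ball_zero_iff, lt_min_iff] at hp
  obtain ⟨ψ, hψ, rfl, hψS⟩ := exists_analyticDisc_boundary_torus p
  refine contractingDiscHull_mono hδK (mem_contractingDiscHull_of_starConvex hψ
    (((convex_ball 0 δ).starConvex (mem_ball_self hδ)).inter starConvex_cone) fun ζ hζ => ?_)
  obtain ⟨h₁, h₂⟩ := hψS ζ hζ
  refine ⟨?_, ?_, ?_⟩
  · rw [mem_ball_zero_iff, Prod.norm_def, h₁, h₂, max_self]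
    exact hp.1
  · rw [h₁, h₂, sub_self]
  · rw [h₁, h₂]
    nlinarith [norm_nonneg (ψ 0)]
end

section
/- Let 𝕋 = { z ∈ ℂ : |z| = 1 } be the unit circle. Then the contracting disc hull of 𝕋 equals 𝕋 itself: 𝕋̂_CD = 𝕋. -/
open Metric Set Filter Topology

variable {E F : Type*} [NormedAddCommGroup E] [NormedSpace ℂ E]
  [NormedAddCommGroup F] [NormedSpace ℂ F]

/-!
Maximum modulus bounds every disc with boundary near the circle by `1 + ε`, so `‖z‖ ≤ 1`.
If `‖z‖ < 1`, take `ε = (1 - ‖z‖) / 2`. The time-0 disc lies near the circle and misses `z`,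
the time-1 disc hits it; let `t₀` be the first time some disc hits `z`, at `w₀`. Every earlier
disc omits `z`, so minimum modulus keeps it at distance `≥ 1 - ε - ‖z‖ > 0` from `z`, and by
continuity in `t` so does `φ t₀ w₀ = z`, which is absurd.
-/

theorem abs_norm_sub_lt_of_mem_thickening_sphere {G : Type*} [SeminormedAddCommGroup G]
    {r ε : ℝ} {x : G} (hx : x ∈ thickening ε (sphere (0 : G) r)) : |‖x‖ - r| < ε := by
  obtain ⟨y, hy, hxy⟩ := mem_thickening_iff.1 hx
  rw [← mem_sphere_zero_iff_norm.1 hy]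
  exact (abs_norm_sub_norm_le x y).trans_lt (dist_eq_norm x y ▸ hxy)

theorem exists_first_hitting_time {X Y : Type*} [TopologicalSpace X] [T2Space X]
    [TopologicalSpace Y] [T1Space Y] {φ : ℝ → X → Y} {B : Set X} {a b : ℝ} {y : Y}
    (hB : IsCompact B) (hφ : ContinuousOn (fun q : ℝ × X => φ q.1 q.2) (Icc a b ×ˢ B))
    (hhit : ∃ t ∈ Icc a b, ∃ w ∈ B, φ t w = y) (ha : ∀ w ∈ B, φ a w ≠ y) :
    ∃ t₀ ∈ Ioc a b, ∃ w₀ ∈ B, φ t₀ w₀ = y ∧ ∀ s ∈ Ico a t₀, ∀ w ∈ B, φ s w ≠ y := by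
  set K := (Icc a b ×ˢ B) ∩ (fun q : ℝ × X => φ q.1 q.2) ⁻¹' {y}
  have hK : IsCompact K :=
    (isCompact_Icc.prod hB).of_isClosed_subset
      (hφ.preimage_isClosed_of_isClosed (isClosed_Icc.prod hB.isClosed) isClosed_singleton)
      inter_subset_left
  obtain ⟨t, ht, w, hw, htw⟩ := hhit
  obtain ⟨-, ⟨⟨t₀, w₀⟩, ⟨⟨ht₀, hw₀⟩, hhit₀⟩, rfl⟩, hleast⟩ :=
    (hK.image continuous_fst).exists_isLeast ⟨t, ⟨(t, w), ⟨⟨ht, hw⟩, htw⟩, rfl⟩⟩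
  have hat₀ : a ≠ t₀ := by
    rintro rfl
    exact ha w₀ hw₀ hhit₀
  refine ⟨t₀, ⟨ht₀.1.lt_of_ne hat₀, ht₀.2⟩, w₀, hw₀, hhit₀, fun s hs w hw hsw => ?_⟩
  exact hs.2.not_ge (hleast ⟨(s, w), ⟨⟨⟨hs.1, hs.2.le.trans ht₀.2⟩, hw⟩, hsw⟩, rfl⟩)

namespace IsAnalyticDisc

theorem diffContOnCl {φ : ℂ → E} (hφ : IsAnalyticDisc φ) : DiffContOnCl ℂ φ (ball 0 1) :=
  ⟨hφ.2, by rw [closure_ball 0 one_ne_zero]; exact hφ.1⟩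

theorem sub_const {φ : ℂ → E} (hφ : IsAnalyticDisc φ) (z : E) :
    IsAnalyticDisc (fun w => φ w - z) :=
  ⟨hφ.1.sub continuousOn_const, hφ.2.sub_const z⟩

theorem inv {φ : ℂ → ℂ} (hφ : IsAnalyticDisc φ) (h : ∀ w ∈ closedBall (0 : ℂ) 1, φ w ≠ 0) :
    IsAnalyticDisc (fun w => (φ w)⁻¹) :=
  ⟨hφ.1.inv₀ h, hφ.2.inv fun w hw => h w (ball_subset_closedBall hw)⟩

theorem norm_le_of_forall_mem_sphere {φ : ℂ → E} (hφ : IsAnalyticDisc φ) {C : ℝ}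
    (hC : ∀ w ∈ sphere (0 : ℂ) 1, ‖φ w‖ ≤ C) {w : ℂ} (hw : w ∈ closedBall (0 : ℂ) 1) :
    ‖φ w‖ ≤ C :=
  Complex.norm_le_of_forall_mem_frontier_norm_le isBounded_ball hφ.diffContOnCl
    (by rwa [frontier_ball 0 one_ne_zero]) (by rwa [closure_ball 0 one_ne_zero])

theorem le_norm_of_forall_mem_sphere {φ : ℂ → ℂ} (hφ : IsAnalyticDisc φ)
    (h0 : ∀ w ∈ closedBall (0 : ℂ) 1, φ w ≠ 0) {C : ℝ} (hC₀ : 0 < C)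
    (hC : ∀ w ∈ sphere (0 : ℂ) 1, C ≤ ‖φ w‖) {w : ℂ} (hw : w ∈ closedBall (0 : ℂ) 1) :
    C ≤ ‖φ w‖ := by
  have hinv : ‖(φ w)⁻¹‖ ≤ C⁻¹ := (hφ.inv h0).norm_le_of_forall_mem_sphere
    (fun v hv => norm_inv (φ v) ▸ inv_anti₀ hC₀ (hC v hv)) hw
  rw [norm_inv] at hinv
  exact (inv_le_inv₀ (norm_pos_iff.2 (h0 w hw)) hC₀).1 hinv

theorem norm_le_one_add_of_image_sphere_subset {φ : ℂ → ℂ} (hφ : IsAnalyticDisc φ) {ε : ℝ}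
    (hb : φ '' sphere (0 : ℂ) 1 ⊆ thickening ε (sphere (0 : ℂ) 1)) {w : ℂ}
    (hw : w ∈ closedBall (0 : ℂ) 1) : ‖φ w‖ ≤ 1 + ε :=
  hφ.norm_le_of_forall_mem_sphere (fun v hv => by
    linarith [(abs_lt.1 (abs_norm_sub_lt_of_mem_thickening_sphere (hb ⟨v, hv, rfl⟩))).2]) hw

theorem one_sub_sub_norm_le_norm_sub {φ : ℂ → ℂ} (hφ : IsAnalyticDisc φ) {ε : ℝ} {z : ℂ}
    (hb : φ '' sphere (0 : ℂ) 1 ⊆ thickening ε (sphere (0 : ℂ) 1)) (hm : 0 < 1 - ε - ‖z‖)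
    (hz : ∀ w ∈ closedBall (0 : ℂ) 1, φ w ≠ z) {w : ℂ} (hw : w ∈ closedBall (0 : ℂ) 1) :
    1 - ε - ‖z‖ ≤ ‖φ w - z‖ := by
  refine (hφ.sub_const z).le_norm_of_forall_mem_sphere (fun v hv => sub_ne_zero.2 (hz v hv)) hm
    (fun v hv => ?_) hw
  have hv := (abs_lt.1 (abs_norm_sub_lt_of_mem_thickening_sphere (hb ⟨v, hv, rfl⟩))).1
  linarith [norm_sub_norm_le (φ v) z]

end IsAnalyticDisc

theorem subset_contractingDiscHull (K : Set E) : K ⊆ contractingDiscHull K := by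
  intro z hz ε hε
  have hzε : z ∈ thickening ε K := self_subset_thickening hε K hz
  refine ⟨fun _ _ => z, continuousOn_const, fun _ _ => ⟨continuousOn_const,
    differentiableOn_const z⟩, ?_, rfl, ?_⟩
  · rintro - - - ⟨w, -, rfl⟩
    exact hzε
  · rintro - ⟨w, -, rfl⟩
    exact hzε

theorem norm_le_one_of_mem_contractingDiscHull_sphere {z : ℂ}
    (hz : z ∈ contractingDiscHull (sphere (0 : ℂ) 1)) : ‖z‖ ≤ 1 := by
  refine le_of_forall_pos_le_add fun ε hε => ?_
  obtain ⟨φ, -, hdisc, hbdy, rfl, -⟩ := hz ε hε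
  have h1 : (1 : ℝ) ∈ Icc (0 : ℝ) 1 := right_mem_Icc.2 zero_le_one
  exact (hdisc 1 h1).norm_le_one_add_of_image_sphere_subset (hbdy 1 h1)
    (mem_closedBall_self zero_le_one)

theorem one_le_norm_of_mem_contractingDiscHull_sphere {z : ℂ}
    (hz : z ∈ contractingDiscHull (sphere (0 : ℂ) 1)) : 1 ≤ ‖z‖ := by
  by_contra! hz1
  set ε := (1 - ‖z‖) / 2 with hε
  have hm : 0 < 1 - ε - ‖z‖ := by linarith
  obtain ⟨φ, hcont, hdisc, hbdy, hφ1, hφ0⟩ := hz ε (by linarith)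
  have hmiss₀ : ∀ w ∈ closedBall (0 : ℂ) 1, φ 0 w ≠ z := by
    rintro w hw rfl
    linarith [(abs_lt.1 (abs_norm_sub_lt_of_mem_thickening_sphere (hφ0 ⟨w, hw, rfl⟩))).1]
  obtain ⟨t₀, ⟨ht₀, ht₀1⟩, w₀, hw₀, hhit, hmiss⟩ := exists_first_hitting_time
    (isCompact_closedBall 0 1) hcont
    ⟨1, right_mem_Icc.2 zero_le_one, 0, mem_closedBall_self zero_le_one, hφ1⟩ hmiss₀
  have hIco : Ico 0 t₀ ⊆ Icc 0 1 := Ico_subset_Icc_self.trans (Icc_subset_Icc_right ht₀1)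
  have hbound : ∀ s ∈ Ico 0 t₀, 1 - ε - ‖z‖ ≤ ‖φ s w₀ - z‖ := fun s hs =>
    (hdisc s (hIco hs)).one_sub_sub_norm_le_norm_sub (hbdy s (hIco hs)) hm (hmiss s hs) hw₀
  have hcont₀ : ContinuousWithinAt (fun s => ‖φ s w₀ - z‖) (Ico 0 t₀) t₀ := by
    have : ContinuousOn (fun s => φ s w₀) (Icc 0 1) :=
      hcont.comp (continuous_id.prodMk continuous_const).continuousOn fun s hs => ⟨hs, hw₀⟩
    exact ((this.sub continuousOn_const).norm.continuousWithinAt ⟨ht₀.le, ht₀1⟩).mono hIco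
  have hlim : 1 - ε - ‖z‖ ≤ ‖φ t₀ w₀ - z‖ :=
    ContinuousWithinAt.closure_le (f := fun _ => 1 - ε - ‖z‖) (g := fun s => ‖φ s w₀ - z‖)
      (closure_Ico ht₀.ne ▸ right_mem_Icc.2 ht₀.le) continuousWithinAt_const hcont₀ hbound
  rw [hhit, sub_self, norm_zero] at hlim
  linarith

/-- the contracting disc hull of the unit circle is the unit circle itself. -/
theorem contractingDiscHull_circle :
    contractingDiscHull (sphere (0 : ℂ) 1) = sphere (0 : ℂ) 1 :=
  Subset.antisymm
    (fun _ hz => mem_sphere_zero_iff_norm.2 <| le_antisymm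
      (norm_le_one_of_mem_contractingDiscHull_sphere hz)
      (one_le_norm_of_mem_contractingDiscHull_sphere hz))
    (subset_contractingDiscHull _)
end
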